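/- Consider the conditions: (1) C is normal; (2) for all distinct maximal elements p,q of C there exist compact a,b ∈ C with a ≰ p, b ≰ q and [a,b] = ⊥; (3) any two distinct maximal elements have disjoint neighbourhoods in Spec(C) with the Zariski topology; (4) every prime element of C lies below a unique maximal element. Then (1) implies (2), (2) implies (3), and (3) implies (4); moreover, if C satisfies condition (⋆), then (4) implies (1). -/

import Mathlib

open CompleteLattice

/-- A complete lattice equipped with a commutator operation, axiomatizing the congruence
lattice of an algebra in a semidegenerate congruence-modular variety whose compact
congruences are closed under the commutator. -/
class CommutatorLattice (C : Type*) [CompleteLattice C] where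
  comm : C → C → C
  comm_comm : ∀ a b : C, comm a b = comm b a
  comm_sSup : ∀ (s : Set C) (b : C), comm (sSup s) b = ⨆ a ∈ s, comm a b
  comm_le_inf : ∀ a b : C, comm a b ≤ a ⊓ b
  comm_top : ∀ a : C, comm a ⊤ = a
  compactlyGenerated : ∀ x : C,
    ∃ s : Set C, (∀ a ∈ s, IsCompactElement a) ∧ sSup s = x
  top_isCompact : IsCompactElement (⊤ : C)
  comm_isCompact : ∀ a b : C, IsCompactElement a → IsCompactElement b →
    IsCompactElement (comm a b)

namespace CommutatorLattice

variable {C : Type*} [CompleteLattice C] [CommutatorLattice C]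

/-- The residuation `a → b := ⨆ {c | [a,c] ≤ b}`. -/
def resid (a b : C) : C := sSup {c : C | comm a c ≤ b}

/-- The annihilator `a⊥ := a → ⊥`. -/
def ann (a : C) : C := resid a ⊥

/-- Iterated commutator: `cpow a n = [a,a]^n`, with the convention `[a,a]^0 = a`.
Note that `[a,b]^n` for `n ≥ 1` equals `cpow (comm a b) (n-1)`. -/
def cpow (a : C) : ℕ → C
  | 0 => a
  | n + 1 => comm (cpow a n) (cpow a n)

/-- Prime elements: `p ≠ ⊤` and `[a,b] ≤ p` implies `a ≤ p` or `b ≤ p`. -/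
def IsPrime (p : C) : Prop := p ≠ ⊤ ∧ ∀ a b : C, comm a b ≤ p → a ≤ p ∨ b ≤ p

/-- The radical `ρ(a) := ⨅ {p prime | a ≤ p}`. -/
def radical (a : C) : C := sInf {p : C | IsPrime p ∧ a ≤ p}

variable (C) in
/-- `C` is semiprime if `ρ(⊥) = ⊥`. -/
def Semiprime : Prop := radical (⊥ : C) = ⊥

variable (C) in
/-- Condition (⋆): for all compact `a`, `b` and all `n ≥ 1` there is `m ≥ 0` with
`[[a,a]^m, [b,b]^m] ≤ [a,b]^n`.  Here `cpow (comm a b) n = [a,b]^(n+1)`, so `n : ℕ`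
ranges exactly over the exponents `≥ 1` of the paper. -/
def Star : Prop := ∀ a b : C, IsCompactElement a → IsCompactElement b →
  ∀ n : ℕ, ∃ m : ℕ, comm (cpow a m) (cpow b m) ≤ cpow (comm a b) n

/-- Pure elements: `t ⊔ a⊥ = ⊤` for every compact `a ≤ t`. -/
def IsPure (t : C) : Prop := ∀ a : C, IsCompactElement a → a ≤ t → t ⊔ ann a = ⊤

/-- w-pure elements: `t ⊔ (a → ρ(⊥)) = ⊤` for every compact `a ≤ t`. -/
def IsWPure (t : C) : Prop :=
  ∀ a : C, IsCompactElement a → a ≤ t → t ⊔ resid a (radical ⊥) = ⊤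

/-- Complemented elements. -/
def IsComplEl (a : C) : Prop := ∃ b : C, a ⊔ b = ⊤ ∧ a ⊓ b = ⊥

/-- Regular elements: joins of sets of complemented elements. -/
def IsRegular (t : C) : Prop := ∃ S : Set C, (∀ a ∈ S, IsComplEl a) ∧ t = sSup S

/-- Max-regular elements: maximal among regular elements distinct from `⊤`. -/
def IsMaxRegular (t : C) : Prop :=
  IsRegular t ∧ t ≠ ⊤ ∧ ∀ u : C, IsRegular u → u ≠ ⊤ → t ≤ u → u = t

/-- Maximal elements of `C \ {⊤}`. -/
def IsMaximal (p : C) : Prop := p ≠ ⊤ ∧ ∀ q : C, q ≠ ⊤ → p ≤ q → q = p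

/-- Minimal primes. -/
def IsMinPrime (p : C) : Prop := IsPrime p ∧ ∀ q : C, IsPrime q → q ≤ p → q = p

variable (C) in
/-- `C` is mp if every prime lies above a unique minimal prime. -/
def MP : Prop := ∀ p : C, IsPrime p → ∃! q : C, IsMinPrime q ∧ q ≤ p

variable (C) in
/-- `C` is PF if `a⊥` is pure for every compact `a`. -/
def PF : Prop := ∀ a : C, IsCompactElement a → IsPure (ann a)

variable (C) in
/-- `C` is PP if `a⊥` is complemented for every compact `a`. -/
def PP : Prop := ∀ a : C, IsCompactElement a → IsComplEl (ann a)

/-- `O(p) := ⨆ {a compact | a⊥ ≰ p}`. -/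
def O (p : C) : C := sSup {a : C | IsCompactElement a ∧ ¬ ann a ≤ p}

variable (C) in
/-- `C` is normal. -/
def Normal : Prop := ∀ t u : C, t ⊔ u = ⊤ →
  ∃ a b : C, t ⊔ a = ⊤ ∧ u ⊔ b = ⊤ ∧ comm a b = ⊥

variable (C) in
/-- `C` is B-normal. -/
def BNormal : Prop := ∀ t u : C, t ⊔ u = ⊤ →
  ∃ a b : C, IsComplEl a ∧ IsComplEl b ∧ t ⊔ a = ⊤ ∧ u ⊔ b = ⊤ ∧ comm a b = ⊥

variable (C) in
/-- `C` is purified. -/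
def Purified : Prop := ∀ p q : C, IsMinPrime p → IsMinPrime q → p ≠ q →
  ∃ a : C, IsComplEl a ∧ a ≤ p ∧ ann a ≤ q

variable (C) in
/-- The prime spectrum of `C`. -/
abbrev Spec := {p : C // IsPrime p}

variable (C) in
/-- The Zariski topology on `Spec C`: the closed sets are the `V(t) = {p | t ≤ p}`,
equivalently the topology generated by the sets `D(t) = {p | t ≰ p}`. -/
def zariskiTop : TopologicalSpace (Spec C) :=
  TopologicalSpace.generateFrom {U : Set (Spec C) | ∃ t : C, U = {p : Spec C | ¬ t ≤ p.1}}

variable (C) in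
/-- The flat topology on `Spec C`: generated by the open basis `V(a)`, `a` compact. -/
def flatTop : TopologicalSpace (Spec C) :=
  TopologicalSpace.generateFrom
    {U : Set (Spec C) | ∃ a : C, IsCompactElement a ∧ U = {p : Spec C | a ≤ p.1}}

end CommutatorLattice

/-!
The implications (1) ⇒ (2) ⇒ (3) ⇒ (4) are direct; for (3) ⇒ (4), Zariski-open sets are closed
under generalization, so a prime below two distinct maximal elements would lie in two disjoint
open sets.

For (4) ⇒ (1) under (⋆), shrink `t ⊔ u = ⊤` to compact `t₀ ⊔ u₀ = ⊤`. The elements `[a,b]^k`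
with `a`, `b` compact and `t₀ ⊔ a = u₀ ⊔ b = ⊤` form an m-system of compact elements. A prime
`d` avoiding it lies below a single maximal element, so `d ⊔ t₀ = ⊤` or `d ⊔ u₀ = ⊤`; a compact
witness `a ≤ d` of this puts `[a,t₀]` (or `[u₀,b]`) below `d`, a contradiction. Hence some
`[a,b]^k = ⊥`, and (⋆) yields `m` with `[[a,a]^m,[b,b]^m] = ⊥`, while still
`t ⊔ [a,a]^m = u ⊔ [b,b]^m = ⊤`.
-/

namespace CommutatorLattice

section Maximal

variable {C : Type*} [CompleteLattice C]

theorem isMaximal_iff_isCoatom {p : C} : IsMaximal p ↔ IsCoatom p := by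
  rw [isCoatom_iff_ge_of_le]
  refine and_congr_right fun _ => forall₂_congr fun q _ => imp_congr_right fun hpq => ?_
  exact ⟨fun h => h.le, fun h => le_antisymm h hpq⟩

theorem IsMaximal.sup_eq_top_of_ne {p q : C} (hp : IsMaximal p) (hq : IsMaximal q)
    (hpq : p ≠ q) : p ⊔ q = ⊤ :=
  (isMaximal_iff_isCoatom.1 hp).sup_eq_top_of_ne (isMaximal_iff_isCoatom.1 hq) hpq

theorem IsMaximal.sup_eq_top_of_not_le {p a : C} (hp : IsMaximal p) (h : ¬ a ≤ p) :
    p ⊔ a = ⊤ :=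
  codisjoint_iff.1 ((isMaximal_iff_isCoatom.1 hp).not_le_iff_codisjoint.1 h)

end Maximal

variable {C : Type*} [CompleteLattice C] [CommutatorLattice C]

theorem comm_sup_left (a b c : C) : comm (a ⊔ b) c = comm a c ⊔ comm b c := by
  rw [← sSup_pair, comm_sSup, iSup_pair]

theorem comm_le_left (a b : C) : comm a b ≤ a := (comm_le_inf a b).trans inf_le_left

theorem comm_le_right (a b : C) : comm a b ≤ b := (comm_le_inf a b).trans inf_le_right

theorem comm_mono_left {a a' : C} (h : a ≤ a') (b : C) : comm a b ≤ comm a' b :=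
  calc comm a b ≤ comm a b ⊔ comm a' b := le_sup_left
    _ = comm a' b := by rw [← comm_sup_left, sup_eq_right.2 h]

theorem comm_mono {a a' b b' : C} (ha : a ≤ a') (hb : b ≤ b') : comm a b ≤ comm a' b' :=
  (comm_mono_left ha b).trans <| by
    rw [comm_comm a', comm_comm a']
    exact comm_mono_left hb a'

theorem comm_sup_sup_le (d x y : C) : comm (d ⊔ x) (d ⊔ y) ≤ d ⊔ comm x y := by
  rw [comm_sup_left]
  refine sup_le (le_sup_of_le_left (comm_le_left _ _)) ?_
  rw [comm_comm, comm_sup_left, comm_comm y x]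
  exact sup_le (le_sup_of_le_left (comm_le_left _ _)) le_sup_right

theorem sup_comm_eq_top {t a b : C} (ha : t ⊔ a = ⊤) (hb : t ⊔ b = ⊤) : t ⊔ comm a b = ⊤ :=
  top_le_iff.1 <|
    calc (⊤ : C) = comm (t ⊔ a) (t ⊔ b) := by rw [ha, hb, comm_top]
      _ ≤ t ⊔ comm a b := comm_sup_sup_le t a b

theorem isCompactElement_cpow {a : C} (h : IsCompactElement a) :
    ∀ n, IsCompactElement (cpow a n)
  | 0 => h
  | n + 1 => comm_isCompact _ _ (isCompactElement_cpow h n) (isCompactElement_cpow h n)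

theorem cpow_antitone (a : C) : Antitone (cpow a) :=
  antitone_nat_of_succ_le fun _ => comm_le_left _ _

theorem cpow_mono {a b : C} (h : a ≤ b) : ∀ n, cpow a n ≤ cpow b n
  | 0 => h
  | n + 1 => comm_mono (cpow_mono h n) (cpow_mono h n)

theorem sup_cpow_eq_top {t a : C} (h : t ⊔ a = ⊤) : ∀ n, t ⊔ cpow a n = ⊤
  | 0 => h
  | n + 1 => sup_comm_eq_top (sup_cpow_eq_top h n) (sup_cpow_eq_top h n)

theorem cpow_comm_comm_le (a a' b b' : C) (k k' : ℕ) :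
    cpow (comm (comm a a') (comm b b')) (max k k' + 1) ≤
      comm (cpow (comm a b) k) (cpow (comm a' b') k') := by
  set x := comm (comm a a') (comm b b')
  have hx : x ≤ comm a b := comm_mono (comm_le_left a a') (comm_le_left b b')
  have hx' : x ≤ comm a' b' := comm_mono (comm_le_right a a') (comm_le_right b b')
  exact comm_mono ((cpow_antitone x (le_max_left k k')).trans (cpow_mono hx k))
    ((cpow_antitone x (le_max_right k k')).trans (cpow_mono hx' k'))

theorem exists_isCompactElement_le_sup_eq_top {t c : C} (h : t ⊔ c = ⊤) :
    ∃ a, IsCompactElement a ∧ a ≤ c ∧ t ⊔ a = ⊤ := by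
  classical
  obtain ⟨s, hs, rfl⟩ := compactlyGenerated c
  obtain ⟨F, hFs, hF⟩ := (isCompactElement_iff_exists_le_sSup_of_le_sSup C ⊤).1 top_isCompact
    (insert t s) (by rw [sSup_insert, h])
  have hmem : ∀ x ∈ F.erase t, x ∈ s := fun x hx =>
    (hFs (Finset.mem_of_mem_erase hx)).resolve_left (Finset.ne_of_mem_erase hx)
  refine ⟨(F.erase t).sup id, isCompactElement_finsetSup _ fun x hx => hs x (hmem x hx),
    Finset.sup_le fun x hx => le_sSup (hmem x hx), top_le_iff.1 (hF.trans ?_)⟩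
  calc F.sup id ≤ (insert t (F.erase t)).sup id := Finset.sup_mono (Finset.insert_erase_subset t F)
    _ = t ⊔ (F.erase t).sup id := Finset.sup_insert

theorem exists_isCompactElement_le_le_sup_eq_top {t u : C} (h : t ⊔ u = ⊤) :
    ∃ t₀ u₀, IsCompactElement t₀ ∧ IsCompactElement u₀ ∧ t₀ ≤ t ∧ u₀ ≤ u ∧ t₀ ⊔ u₀ = ⊤ := by
  obtain ⟨t₀, ht₀, ht₀t, ht₀u⟩ := exists_isCompactElement_le_sup_eq_top (sup_comm t u ▸ h)
  obtain ⟨u₀, hu₀, hu₀u, h₀⟩ := exists_isCompactElement_le_sup_eq_top (sup_comm u t₀ ▸ ht₀u)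
  exact ⟨t₀, u₀, ht₀, hu₀, ht₀t, hu₀u, h₀⟩

theorem IsMaximal.isPrime {m : C} (hm : IsMaximal m) : IsPrime m := by
  refine ⟨hm.1, fun a b hab => ?_⟩
  by_contra! h
  have := sup_comm_eq_top (hm.sup_eq_top_of_not_le h.1) (hm.sup_eq_top_of_not_le h.2)
  exact hm.1 (sup_eq_left.2 hab ▸ this)

theorem exists_isMaximal_ge {c : C} (hc : c ≠ ⊤) : ∃ m, IsMaximal m ∧ c ≤ m := by
  have := coatomic_of_top_compact (top_isCompact (C := C))
  obtain ⟨m, hm, hcm⟩ := (eq_top_or_exists_le_coatom c).resolve_left hc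
  exact ⟨m, isMaximal_iff_isCoatom.2 hm, hcm⟩

section MSystem

variable {S : Set C}

theorem isPrime_of_maximal_avoiding (hne : S.Nonempty)
    (hS : ∀ s₁ ∈ S, ∀ s₂ ∈ S, ∃ s ∈ S, s ≤ comm s₁ s₂) {d : C}
    (hd : Maximal (fun e => ∀ s ∈ S, ¬ s ≤ e) d) : IsPrime d := by
  refine ⟨fun h => hne.elim fun s hs => hd.1 s hs (h ▸ le_top), fun x y hxy => ?_⟩
  by_contra! hxy'
  have below_sup {z : C} (hz : ¬ z ≤ d) : ∃ s ∈ S, s ≤ d ⊔ z := by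
    by_contra! h
    exact hz (le_sup_right.trans (hd.2 h le_sup_left))
  obtain ⟨s₁, hs₁, hs₁x⟩ := below_sup hxy'.1
  obtain ⟨s₂, hs₂, hs₂y⟩ := below_sup hxy'.2
  obtain ⟨s, hs, hs₁₂⟩ := hS s₁ hs₁ s₂ hs₂
  exact hd.1 s hs <| hs₁₂.trans <| (comm_mono hs₁x hs₂y).trans <|
    (comm_sup_sup_le d x y).trans (sup_le le_rfl hxy)

theorem exists_isPrime_avoiding (hcpt : ∀ s ∈ S, IsCompactElement s) (hne : S.Nonempty)
    (hS : ∀ s₁ ∈ S, ∀ s₂ ∈ S, ∃ s ∈ S, s ≤ comm s₁ s₂) {c : C} (hc : ∀ s ∈ S, ¬ s ≤ c) :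
    ∃ d, IsPrime d ∧ c ≤ d ∧ ∀ s ∈ S, ¬ s ≤ d := by
  obtain ⟨d, hcd, hd⟩ := zorn_le_nonempty₀ {e : C | ∀ s ∈ S, ¬ s ≤ e}
    (fun ch hch hchain y hy => ⟨sSup ch, fun s hs hle => by
      obtain ⟨e, he, hse⟩ := (isCompactElement_iff_le_of_directed_sSup_le C s).1 (hcpt s hs)
        ch ⟨y, hy⟩ hchain.directedOn hle
      exact hch he s hs hse, fun _ => le_sSup⟩) c hc
  exact ⟨d, isPrime_of_maximal_avoiding hne hS hd, hcd, hd.1⟩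

end MSystem

theorem isLowerSet_of_isOpen_zariskiTop {U : Set (Spec C)} (hU : (zariskiTop C).IsOpen U) :
    IsLowerSet U := by
  induction hU with
  | basic u hu => obtain ⟨t, rfl⟩ := hu; exact fun p q hqp htp htq => htp (htq.trans hqp)
  | univ => exact isLowerSet_univ
  | inter u v _ _ hu hv => exact hu.inter hv
  | sUnion _ _ ih => exact isLowerSet_sUnion ih

variable (C) in
def MaxSeparated : Prop := ∀ p q : C, IsMaximal p → IsMaximal q → p ≠ q →
  ∃ a b : C, IsCompactElement a ∧ IsCompactElement b ∧ ¬ a ≤ p ∧ ¬ b ≤ q ∧ comm a b = ⊥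

variable (C) in
def MaxHausdorff : Prop := ∀ p q : Spec C, IsMaximal p.1 → IsMaximal q.1 → p ≠ q →
  ∃ U V : Set (Spec C), (zariskiTop C).IsOpen U ∧ (zariskiTop C).IsOpen V ∧
    p ∈ U ∧ q ∈ V ∧ U ∩ V = ∅

variable (C) in
def PM : Prop := ∀ p : C, IsPrime p → ∃! q : C, IsMaximal q ∧ p ≤ q

theorem Normal.maxSeparated (hN : Normal C) : MaxSeparated C := by
  intro p q hp hq hpq
  obtain ⟨a', b', ha', hb', hab'⟩ := hN p q (hp.sup_eq_top_of_ne hq hpq)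
  obtain ⟨a, ha, haa', hpa⟩ := exists_isCompactElement_le_sup_eq_top ha'
  obtain ⟨b, hb, hbb', hqb⟩ := exists_isCompactElement_le_sup_eq_top hb'
  refine ⟨a, b, ha, hb, fun hap => hp.1 ?_, fun hbq => hq.1 ?_,
    le_bot_iff.1 (hab' ▸ comm_mono haa' hbb')⟩
  · rwa [sup_eq_left.2 hap] at hpa
  · rwa [sup_eq_left.2 hbq] at hqb

theorem MaxSeparated.maxHausdorff (h : MaxSeparated C) : MaxHausdorff C := by
  intro p q hp hq hpq
  obtain ⟨a, b, -, -, hap, hbq, hab⟩ := h p q hp hq (Subtype.coe_injective.ne hpq)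
  refine ⟨{r | ¬ a ≤ r.1}, {r | ¬ b ≤ r.1}, TopologicalSpace.isOpen_generateFrom_of_mem ⟨a, rfl⟩,
    TopologicalSpace.isOpen_generateFrom_of_mem ⟨b, rfl⟩, hap, hbq, ?_⟩
  refine Set.eq_empty_iff_forall_notMem.2 fun r ⟨har, hbr⟩ => ?_
  exact (r.2.2 a b (hab ▸ bot_le)).elim har hbr

theorem MaxHausdorff.pm (h : MaxHausdorff C) : PM C := by
  intro p hp
  obtain ⟨m, hm, hpm⟩ := exists_isMaximal_ge hp.1
  refine ⟨m, ⟨hm, hpm⟩, fun q ⟨hq, hpq⟩ => ?_⟩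
  by_contra hqm
  obtain ⟨U, V, hU, hV, hqU, hmV, hUV⟩ :=
    h ⟨q, hq.isPrime⟩ ⟨m, hm.isPrime⟩ hq hm (hqm ∘ congrArg Subtype.val)
  have hpU : (⟨p, hp⟩ : Spec C) ∈ U := isLowerSet_of_isOpen_zariskiTop hU hpq hqU
  have hpV : (⟨p, hp⟩ : Spec C) ∈ V := isLowerSet_of_isOpen_zariskiTop hV hpm hmV
  exact Set.eq_empty_iff_forall_notMem.1 hUV _ ⟨hpU, hpV⟩

theorem PM.sup_eq_top_or_sup_eq_top (h : PM C) {d t u : C} (hd : IsPrime d)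
    (htu : t ⊔ u = ⊤) : d ⊔ t = ⊤ ∨ d ⊔ u = ⊤ := by
  by_contra! hne
  obtain ⟨m, hm, hdtm⟩ := exists_isMaximal_ge hne.1
  obtain ⟨m', hm', hdum'⟩ := exists_isMaximal_ge hne.2
  have hmm' : m = m' :=
    (h d hd).unique ⟨hm, le_sup_left.trans hdtm⟩ ⟨hm', le_sup_left.trans hdum'⟩
  subst hmm'
  exact hm.1 (top_le_iff.1 (htu ▸ sup_le (le_sup_right.trans hdtm) (le_sup_right.trans hdum')))

theorem PM.exists_cpow_comm_eq_bot (h : PM C) {t u : C} (ht : IsCompactElement t)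
    (hu : IsCompactElement u) (htu : t ⊔ u = ⊤) :
    ∃ a b : C, IsCompactElement a ∧ IsCompactElement b ∧ t ⊔ a = ⊤ ∧ u ⊔ b = ⊤ ∧
      ∃ n, cpow (comm a b) n = ⊥ := by
  by_contra hnil
  set S : Set C := {x | ∃ a b n, IsCompactElement a ∧ IsCompactElement b ∧
    t ⊔ a = ⊤ ∧ u ⊔ b = ⊤ ∧ cpow (comm a b) n = x}
  have hcpt : ∀ x ∈ S, IsCompactElement x := by
    rintro _ ⟨a, b, n, ha, hb, -, -, rfl⟩
    exact isCompactElement_cpow (comm_isCompact a b ha hb) n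
  have hne : S.Nonempty :=
    ⟨_, ⊤, ⊤, 0, top_isCompact, top_isCompact, sup_top_eq t, sup_top_eq u, rfl⟩
  have hS : ∀ s₁ ∈ S, ∀ s₂ ∈ S, ∃ s ∈ S, s ≤ comm s₁ s₂ := by
    rintro _ ⟨a, b, k, ha, hb, hta, hub, rfl⟩ _ ⟨a', b', k', ha', hb', hta', hub', rfl⟩
    exact ⟨_, ⟨comm a a', comm b b', max k k' + 1, comm_isCompact a a' ha ha',
      comm_isCompact b b' hb hb', sup_comm_eq_top hta hta', sup_comm_eq_top hub hub', rfl⟩,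
      cpow_comm_comm_le a a' b b' k k'⟩
  have hbot : ∀ x ∈ S, ¬ x ≤ ⊥ := by
    rintro _ ⟨a, b, n, ha, hb, hta, hub, rfl⟩ hle
    exact hnil ⟨a, b, ha, hb, hta, hub, n, le_bot_iff.1 hle⟩
  obtain ⟨d, hd, -, hdS⟩ := exists_isPrime_avoiding hcpt hne hS hbot
  rcases h.sup_eq_top_or_sup_eq_top hd htu with hdt | hdu
  · obtain ⟨a, ha, had, hta⟩ := exists_isCompactElement_le_sup_eq_top (sup_comm d t ▸ hdt)
    exact hdS _ ⟨a, t, 0, ha, ht, hta, sup_comm t u ▸ htu, rfl⟩ ((comm_le_left a t).trans had)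
  · obtain ⟨b, hb, hbd, hub⟩ := exists_isCompactElement_le_sup_eq_top (sup_comm d u ▸ hdu)
    exact hdS _ ⟨u, b, 0, hu, hb, htu, hub, rfl⟩ ((comm_le_right u b).trans hbd)

theorem PM.normal (h : PM C) (hstar : Star C) : Normal C := by
  intro t u htu
  obtain ⟨t₀, u₀, ht₀, hu₀, ht₀t, hu₀u, h₀⟩ := exists_isCompactElement_le_le_sup_eq_top htu
  obtain ⟨a, b, ha, hb, hta, hub, n, hn⟩ := h.exists_cpow_comm_eq_bot ht₀ hu₀ h₀
  obtain ⟨m, hm⟩ := hstar a b ha hb n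
  refine ⟨cpow a m, cpow b m, top_le_iff.1 ?_, top_le_iff.1 ?_, le_bot_iff.1 (hn ▸ hm)⟩
  · exact (sup_cpow_eq_top hta m).ge.trans (sup_le_sup_right ht₀t _)
  · exact (sup_cpow_eq_top hub m).ge.trans (sup_le_sup_right hu₀u _)

theorem statement7 :
    (Normal C →
      ∀ p q : C, IsMaximal p → IsMaximal q → p ≠ q →
        ∃ a b : C, IsCompactElement a ∧ IsCompactElement b ∧
          ¬ a ≤ p ∧ ¬ b ≤ q ∧ comm a b = ⊥) ∧
    ((∀ p q : C, IsMaximal p → IsMaximal q → p ≠ q →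
        ∃ a b : C, IsCompactElement a ∧ IsCompactElement b ∧
          ¬ a ≤ p ∧ ¬ b ≤ q ∧ comm a b = ⊥) →
      ∀ p q : Spec C, IsMaximal p.1 → IsMaximal q.1 → p ≠ q →
        ∃ U V : Set (Spec C), (zariskiTop C).IsOpen U ∧ (zariskiTop C).IsOpen V ∧
          p ∈ U ∧ q ∈ V ∧ U ∩ V = ∅) ∧
    ((∀ p q : Spec C, IsMaximal p.1 → IsMaximal q.1 → p ≠ q →
        ∃ U V : Set (Spec C), (zariskiTop C).IsOpen U ∧ (zariskiTop C).IsOpen V ∧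
          p ∈ U ∧ q ∈ V ∧ U ∩ V = ∅) →
      ∀ p : C, IsPrime p → ∃! q : C, IsMaximal q ∧ p ≤ q) ∧
    (Star C →
      (∀ p : C, IsPrime p → ∃! q : C, IsMaximal q ∧ p ≤ q) → Normal C) :=
  ⟨Normal.maxSeparated, MaxSeparated.maxHausdorff, MaxHausdorff.pm,
    fun hstar h => PM.normal h hstar⟩

end CommutatorLattice
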